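/- arXiv:math/0610500 — 3 statements merged into one kernel-verified Lean document; each statement's English description precedes it below -/
import Mathlib

section
/- For a restriction category X, the following are equivalent: (i) X has a zero object 0 such that for each object A the zero map 0_{AA} : A → A is a restriction idempotent (restriction zero); (ii) X has an initial object 0 and a terminal object 1, and each unique map z_A : 0 → A is a restriction monic; (iii) X has a terminal object 1 and each unique map t_A : A → 1 is a restriction retraction. -/
open CategoryTheory CategoryTheory.Limits

universe v u

/-- A restriction category: a category with an operation assigning to each
morphism `f : A ⟶ B` a morphism `ρ f : A ⟶ A` satisfying axioms R.1–R.4.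
(Composition is written diagrammatically: `f ≫ g` is "first `f`, then `g`",
so the paper's `g ∘ f` is `f ≫ g`.) -/
class RestrictionCategory (C : Type u) [Category.{v} C] where
  ρ : ∀ {A B : C}, (A ⟶ B) → (A ⟶ A)
  R1 : ∀ {A B : C} (f : A ⟶ B), ρ f ≫ f = f
  R2 : ∀ {A B D : C} (f : A ⟶ B) (g : A ⟶ D), ρ f ≫ ρ g = ρ g ≫ ρ f
  R3 : ∀ {A B D : C} (f : A ⟶ B) (g : A ⟶ D), ρ (ρ f ≫ g) = ρ f ≫ ρ g
  R4 : ∀ {A B D : C} (f : A ⟶ B) (g : B ⟶ D), f ≫ ρ g = ρ (f ≫ g) ≫ f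

open RestrictionCategory

/-!
All three conditions force a zero object. In (ii) the initial object is a retract of the terminal
one, hence terminal. In (iii) a section `i` of the restriction retraction `t_A` is unique: any `g`
with `g ≫ t_A = 𝟙` satisfies `g = ρ (g ≫ t_A) ≫ g = g ≫ ρ t_A = g ≫ t_A ≫ i = i`, so the terminal
object is also initial. Over a zero object `Z` every map `Z ⟶ A` is total, so
`ρ (0_AA) = ρ (A ⟶ Z)`, and each of the three conditions says `(A ⟶ Z) ≫ (Z ⟶ A) = ρ (A ⟶ Z)`.
-/

namespace CategoryTheory.Limits

variable {C : Type u} [Category.{v} C]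

def IsTerminal.ofRetract {X Y : C} (h : Retract X Y) (hY : IsTerminal Y) : IsTerminal X :=
  IsTerminal.ofUniqueHom (fun Z => hY.from Z ≫ h.r) fun Z g => by
    rw [← hY.hom_ext (g ≫ h.i) (hY.from Z), Category.assoc, h.retract, Category.comp_id]

theorem IsZero.of_isInitial_of_isTerminal {X : C} (hI : IsInitial X) (hT : IsTerminal X) :
    IsZero X :=
  ⟨fun Y => ⟨⟨⟨hI.to Y⟩, fun _ => hI.hom_ext _ _⟩⟩,
    fun Y => ⟨⟨⟨hT.from Y⟩, fun _ => hT.hom_ext _ _⟩⟩⟩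

end CategoryTheory.Limits

namespace RestrictionCategory

variable {C : Type u} [Category.{v} C] [RestrictionCategory C]

def IsRestrictionIdempotent {A : C} (e : A ⟶ A) : Prop :=
  ρ e = e

def IsRestrictionMonic {A B : C} (m : A ⟶ B) : Prop :=
  ρ m = 𝟙 A ∧ ∃ r : B ⟶ A, m ≫ r = 𝟙 A ∧ r ≫ m = ρ r

def IsRestrictionRetraction {A B : C} (r : A ⟶ B) : Prop :=
  ∃ i : B ⟶ A, i ≫ r = 𝟙 B ∧ r ≫ i = ρ r

theorem rho_id (A : C) : ρ (𝟙 A) = 𝟙 A := by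
  simpa using R1 (𝟙 A)

theorem rho_comp_rho_comp {A B D : C} (f : A ⟶ B) (g : B ⟶ D) :
    ρ f ≫ ρ (f ≫ g) = ρ (f ≫ g) := by
  rw [← R3, ← Category.assoc, R1]

theorem rho_comp_rho {A B D : C} (f : A ⟶ B) (g : B ⟶ D) : ρ (f ≫ ρ g) = ρ (f ≫ g) := by
  rw [R4, R3, R2, rho_comp_rho_comp]

theorem rho_comp_of_rho_eq_id {A B D : C} (f : A ⟶ B) {g : B ⟶ D} (hg : ρ g = 𝟙 B) :
    ρ (f ≫ g) = ρ f := by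
  rw [← rho_comp_rho, hg, Category.comp_id]

theorem eq_of_comp_eq_id_of_comp_eq_rho {A B : C} {r : A ⟶ B} {i g : B ⟶ A}
    (hi : r ≫ i = ρ r) (hg : g ≫ r = 𝟙 B) : g = i :=
  calc g = ρ (g ≫ r) ≫ g := by rw [hg, rho_id, Category.id_comp]
    _ = g ≫ ρ r := (R4 g r).symm
    _ = i := by rw [← hi, ← Category.assoc, hg, Category.id_comp]

end RestrictionCategory

namespace CategoryTheory.Limits

open RestrictionCategory

variable {C : Type u} [Category.{v} C] [RestrictionCategory C]

noncomputable def IsTerminal.isInitialOfIsRestrictionRetraction {T : C} (hT : IsTerminal T)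
    (h : ∀ A, IsRestrictionRetraction (hT.from A)) : IsInitial T :=
  IsInitial.ofUniqueHom (fun A => (h A).choose) fun A _ =>
    eq_of_comp_eq_id_of_comp_eq_rho (h A).choose_spec.2 (hT.hom_ext _ _)

namespace IsZero

variable {Z : C} (hZ : IsZero Z) (A : C)

theorem rho_from_comp_to : ρ (hZ.from_ A ≫ hZ.to_ A) = ρ (hZ.from_ A) :=
  rho_comp_of_rho_eq_id _ (hZ.eq_of_src _ _)

theorem isRestrictionIdempotent_iff :
    IsRestrictionIdempotent (hZ.from_ A ≫ hZ.to_ A) ↔ IsRestrictionRetraction (hZ.from_ A) := by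
  rw [IsRestrictionIdempotent, rho_from_comp_to]
  constructor
  · exact fun h => ⟨hZ.to_ A, hZ.eq_of_src _ _, h.symm⟩
  · rintro ⟨i, -, hi⟩
    rw [← hi, hZ.eq_of_src i]

theorem isRestrictionMonic_iff :
    IsRestrictionMonic (hZ.to_ A) ↔ IsRestrictionRetraction (hZ.from_ A) := by
  constructor
  · rintro ⟨-, r, -, hr⟩
    exact ⟨hZ.to_ A, hZ.eq_of_src _ _, by rwa [hZ.from_eq r]⟩
  · rintro ⟨i, -, hi⟩
    exact ⟨hZ.eq_of_src _ _, hZ.from_ A, hZ.eq_of_src _ _, by rwa [hZ.to_eq i]⟩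

end IsZero

end CategoryTheory.Limits

namespace RestrictionCategory

variable {C : Type u} [Category.{v} C] [RestrictionCategory C]

theorem exists_restrictionZero_iff_exists_initial_restrictionMonic :
    (∃ (Z : C) (hZ : IsZero Z), ∀ A, IsRestrictionIdempotent (hZ.from_ A ≫ hZ.to_ A)) ↔
      ∃ (O : C) (hO : IsInitial O) (T : C) (_ : IsTerminal T), ∀ A,
        IsRestrictionMonic (hO.to A) := by
  constructor
  · rintro ⟨Z, hZ, h⟩
    refine ⟨Z, hZ.isInitial, Z, hZ.isTerminal, fun A => ?_⟩
    rw [hZ.eq_of_src (hZ.isInitial.to A) (hZ.to_ A), hZ.isRestrictionMonic_iff]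
    exact (hZ.isRestrictionIdempotent_iff A).1 (h A)
  · rintro ⟨O, hO, T, hT, h⟩
    obtain ⟨-, r, hr, -⟩ := h T
    have hZ : IsZero O := .of_isInitial_of_isTerminal hO (hT.ofRetract ⟨hO.to T, r, hr⟩)
    refine ⟨O, hZ, fun A => ?_⟩
    rw [hZ.isRestrictionIdempotent_iff, ← hZ.isRestrictionMonic_iff, hZ.to_eq (hO.to A)]
    exact h A

theorem exists_restrictionZero_iff_exists_terminal_restrictionRetraction :
    (∃ (Z : C) (hZ : IsZero Z), ∀ A, IsRestrictionIdempotent (hZ.from_ A ≫ hZ.to_ A)) ↔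
      ∃ (T : C) (hT : IsTerminal T), ∀ A, IsRestrictionRetraction (hT.from A) := by
  constructor
  · rintro ⟨Z, hZ, h⟩
    refine ⟨Z, hZ.isTerminal, fun A => ?_⟩
    rw [hZ.eq_of_tgt (hZ.isTerminal.from A) (hZ.from_ A), ← hZ.isRestrictionIdempotent_iff]
    exact h A
  · rintro ⟨T, hT, h⟩
    have hZ : IsZero T := .of_isInitial_of_isTerminal (hT.isInitialOfIsRestrictionRetraction h) hT
    refine ⟨T, hZ, fun A => ?_⟩
    rw [hZ.isRestrictionIdempotent_iff, hZ.from_eq (hT.from A)]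
    exact h A

end RestrictionCategory

/-- For a restriction category `X`, the following are equivalent:
(i) `X` has a restriction zero: a zero object `Z` such that each zero map
    `A ⟶ A` (through `Z`) is a restriction idempotent;
(ii) `X` has an initial object `O` and a terminal object `T`, and each unique
    map `z_A : O ⟶ A` is a restriction monic (total, with a restriction
    retraction `m` satisfying `z_A ≫ m = 𝟙` and `m ≫ z_A = ρ m`);
(iii) `X` has a terminal object `T` and each unique map `t_A : A ⟶ T` is a
    restriction retraction (there is `i` with `i ≫ t_A = 𝟙` and
    `t_A ≫ i = ρ t_A`). -/
theorem stmt_7 {C : Type u} [Category.{v} C] [RestrictionCategory C] :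
    ((∃ (Z : C) (hZ : IsZero Z), ∀ A : C,
        ρ (hZ.from_ A ≫ hZ.to_ A) = hZ.from_ A ≫ hZ.to_ A) ↔
     (∃ (O : C) (hO : IsInitial O) (T : C) (_ : IsTerminal T), ∀ A : C,
        ρ (hO.to A) = 𝟙 O ∧
        ∃ m : A ⟶ O, hO.to A ≫ m = 𝟙 O ∧ m ≫ hO.to A = ρ m)) ∧
    ((∃ (O : C) (hO : IsInitial O) (T : C) (_ : IsTerminal T), ∀ A : C,
        ρ (hO.to A) = 𝟙 O ∧
        ∃ m : A ⟶ O, hO.to A ≫ m = 𝟙 O ∧ m ≫ hO.to A = ρ m) ↔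
     (∃ (T : C) (hT : IsTerminal T), ∀ A : C,
        ∃ i : T ⟶ A, i ≫ hT.from A = 𝟙 T ∧ hT.from A ≫ i = ρ (hT.from A))) :=
  ⟨exists_restrictionZero_iff_exists_initial_restrictionMonic,
    exists_restrictionZero_iff_exists_initial_restrictionMonic.symm.trans
      exists_restrictionZero_iff_exists_terminal_restrictionRetraction⟩
end

section
/- In a restriction category with restriction coproducts and restriction zero, if f : A → B + C has decision h : A → A + A and f' : A' → B' + C' has decision h' : A' → A' + A', then the map (1+τ+1) ∘ (f + f') : A + A' → (B + B') + (C + C') has decision (1+τ+1) ∘ (h + h') : A + A' → (A+A') + (A+A'), where τ denotes the symmetry isomorphism of the coproduct. -/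
/-!
Everything happens componentwise. In a restriction category a monomorphism has identity
restriction, so the coproduct injections (split by `i*`, `j*`) and the exchange isomorphism
`1+τ+1` are total; hence `ρ` commutes with `+` and ignores postcomposition with `1+τ+1`.
For `F = (1+τ+1)(f+f')` this makes `⟨overline{i* F}|overline{j* F}⟩` the composite of
`1+τ+1` with `⟨overline{i* f}|overline{j* f}⟩ + ⟨overline{i* f'}|overline{j* f'}⟩`.
Restriction inverses are stable under `+` and under precomposition with an isomorphism
(postcomposing the inverse with its inverse), which gives the two inverse equations, and
`ρ((1+τ+1)(h+h')) = ρ h + ρ h' = ρ f + ρ f' = ρ F`.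
-/

open CategoryTheory CategoryTheory.Limits

universe v u

open RestrictionCategory

open ZeroObject

variable {C : Type u} [Category.{v} C] [RestrictionCategory C]
  [HasBinaryCoproducts C] [HasZeroObject C] [HasZeroMorphisms C]

/-- The restriction retraction `⟨1|0⟩ : A ⨿ B ⟶ A` of the first injection. -/
noncomputable def iStar (A B : C) : (A ⨿ B) ⟶ A := coprod.desc (𝟙 A) 0

/-- The restriction retraction `⟨0|1⟩ : A ⨿ B ⟶ B` of the second injection. -/
noncomputable def jStar (A B : C) : (A ⨿ B) ⟶ B := coprod.desc 0 (𝟙 B)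

/-- `h : A ⟶ A ⨿ A` is a decision for `f : A ⟶ B ⨿ D` if it is restriction
inverse to `⟨overline{i* f} | overline{j* f}⟩ : A ⨿ A ⟶ A` and `ρ h = ρ f`. -/
def IsDecision {A B D : C} (f : A ⟶ B ⨿ D) (h : A ⟶ A ⨿ A) : Prop :=
  coprod.desc (ρ (f ≫ iStar B D)) (ρ (f ≫ jStar B D)) ≫ h =
    ρ (coprod.desc (ρ (f ≫ iStar B D)) (ρ (f ≫ jStar B D))) ∧
  h ≫ coprod.desc (ρ (f ≫ iStar B D)) (ρ (f ≫ jStar B D)) = ρ h ∧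
  ρ h = ρ f

/-- The middle-exchange isomorphism `1 + τ + 1 : (W ⨿ X) ⨿ (Y ⨿ Z) ⟶
(W ⨿ Y) ⨿ (X ⨿ Z)`. -/
noncomputable def exch (W X Y Z : C) : (W ⨿ X) ⨿ (Y ⨿ Z) ⟶ (W ⨿ Y) ⨿ (X ⨿ Z) :=
  coprod.desc (coprod.map coprod.inl coprod.inl) (coprod.map coprod.inr coprod.inr)

section Exchange

variable {𝒞 : Type*} [Category 𝒞] [HasBinaryCoproducts 𝒞]

noncomputable def exchIso (W X Y Z : 𝒞) : (W ⨿ X) ⨿ (Y ⨿ Z) ≅ (W ⨿ Y) ⨿ (X ⨿ Z) where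
  hom := exch W X Y Z
  inv := exch W Y X Z
  -- The coproduct instances inside `exch`'s body differ syntactically from the standard ones,
  -- so `simp` leaves `inl ≫ desc _ _` goals; the second pass closes them, here and below.
  hom_inv_id := by ext <;> simp [exch] <;> simp only [coprod.inl_desc, coprod.inr_desc]
  inv_hom_id := by ext <;> simp [exch] <;> simp only [coprod.inl_desc, coprod.inr_desc]

instance (W X Y Z : 𝒞) : IsIso (exch W X Y Z) := (exchIso W X Y Z).isIso_hom

lemma coprod_desc_map_map_eq_exch_comp {W X Y Z T U : 𝒞} (a : W ⟶ T) (b : X ⟶ T)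
    (c : Y ⟶ U) (d : Z ⟶ U) :
    coprod.desc (coprod.map a c) (coprod.map b d) =
      exch W Y X Z ≫ coprod.map (coprod.desc a b) (coprod.desc c d) := by
  ext <;> simp [exch] <;> simp only [coprod.inl_desc, coprod.inr_desc]

variable [HasZeroMorphisms 𝒞]

lemma exch_iStar (W X Y Z : 𝒞) :
    exch W X Y Z ≫ iStar (W ⨿ Y) (X ⨿ Z) = coprod.map (iStar W X) (iStar Y Z) := by
  ext <;> simp [exch, iStar] <;> simp only [coprod.inl_desc, coprod.inr_desc]

lemma exch_jStar (W X Y Z : 𝒞) :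
    exch W X Y Z ≫ jStar (W ⨿ Y) (X ⨿ Z) = coprod.map (jStar W X) (jStar Y Z) := by
  ext <;> simp [exch, jStar] <;> simp only [coprod.inl_desc, coprod.inr_desc]

end Exchange

section Restriction

variable {𝒞 : Type*} [Category 𝒞] [RestrictionCategory 𝒞] {X Y Z : 𝒞}

namespace RestrictionCategory

lemma rho_eq_id_of_mono (f : X ⟶ Y) [Mono f] : ρ f = 𝟙 X :=
  (cancel_mono f).1 (by rw [R1, Category.id_comp])

lemma rho_comp_rho_s13 (f : X ⟶ Y) (g : Y ⟶ Z) : ρ (f ≫ ρ g) = ρ (f ≫ g) :=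
  calc ρ (f ≫ ρ g) = ρ (ρ (f ≫ g) ≫ f) := by rw [R4]
    _ = ρ f ≫ ρ (f ≫ g) := by rw [R3, R2]
    _ = ρ (f ≫ g) := by rw [← R3, ← Category.assoc, R1]

lemma rho_comp_mono (f : X ⟶ Y) (g : Y ⟶ Z) [Mono g] : ρ (f ≫ g) = ρ f := by
  rw [← rho_comp_rho_s13, rho_eq_id_of_mono g, Category.comp_id]

end RestrictionCategory

def IsRestrictionInverse (f : X ⟶ Y) (g : Y ⟶ X) : Prop :=
  f ≫ g = ρ f ∧ g ≫ f = ρ g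

lemma IsRestrictionInverse.iso_comp {W : 𝒞} {f : X ⟶ Y} {g : Y ⟶ X}
    (hfg : IsRestrictionInverse f g) (e : W ≅ X) :
    IsRestrictionInverse (e.hom ≫ f) (g ≫ e.inv) := by
  obtain ⟨hfg, hgf⟩ := hfg
  constructor
  · rw [Category.assoc, ← Category.assoc f, hfg, ← Category.assoc, R4, Category.assoc,
      e.hom_inv_id, Category.comp_id]
  · rw [Category.assoc, e.inv_hom_id_assoc, hgf, rho_comp_mono]

end Restriction

section RestrictionCoproducts

variable {𝒞 : Type*} [Category 𝒞] [RestrictionCategory 𝒞] [HasBinaryCoproducts 𝒞]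
  {W X Y Z : 𝒞}

lemma rho_coprod_desc (a : X ⟶ Z) (b : Y ⟶ Z) :
    ρ (coprod.desc a b) = coprod.map (ρ a) (ρ b) := by
  ext
  · rw [R4, coprod.inl_desc, coprod.inl_map]
  · rw [R4, coprod.inr_desc, coprod.inr_map]

variable [MonoCoprod 𝒞]

lemma rho_coprod_map (u : X ⟶ Z) (v : Y ⟶ W) :
    ρ (coprod.map u v) = coprod.map (ρ u) (ρ v) := by
  rw [← coprod.desc_comp_inl_comp_inr, rho_coprod_desc, rho_comp_mono, rho_comp_mono]

lemma IsRestrictionInverse.coprod_map {f : X ⟶ Y} {g : Y ⟶ X} {f' : Z ⟶ W} {g' : W ⟶ Z}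
    (hfg : IsRestrictionInverse f g) (hfg' : IsRestrictionInverse f' g') :
    IsRestrictionInverse (coprod.map f f') (coprod.map g g') :=
  ⟨by rw [coprod.map_map, hfg.1, hfg'.1, rho_coprod_map],
    by rw [coprod.map_map, hfg.2, hfg'.2, rho_coprod_map]⟩

end RestrictionCoproducts

section Decisions

variable {𝒞 : Type*} [Category 𝒞] [RestrictionCategory 𝒞] [HasBinaryCoproducts 𝒞]
  [HasZeroMorphisms 𝒞] {A B D A' B' D' : 𝒞}

noncomputable def copairRestrictions (f : A ⟶ B ⨿ D) : A ⨿ A ⟶ A :=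
  coprod.desc (ρ (f ≫ iStar B D)) (ρ (f ≫ jStar B D))

lemma isDecision_iff (f : A ⟶ B ⨿ D) (h : A ⟶ A ⨿ A) :
    IsDecision f h ↔ IsRestrictionInverse (copairRestrictions f) h ∧ ρ h = ρ f :=
  and_assoc.symm

lemma copairRestrictions_coprod_map_comp_exch (f : A ⟶ B ⨿ D) (f' : A' ⟶ B' ⨿ D') :
    copairRestrictions (coprod.map f f' ≫ exch B D B' D') =
      exch A A' A A' ≫ coprod.map (copairRestrictions f) (copairRestrictions f') := by
  unfold copairRestrictions
  rw [Category.assoc, Category.assoc, exch_iStar, exch_jStar,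
    coprod.map_map, coprod.map_map, rho_coprod_map, rho_coprod_map,
    coprod_desc_map_map_eq_exch_comp]

end Decisions

theorem stmt_13_general
    {A B D A' B' D' : C}
    (f : A ⟶ B ⨿ D) (h : A ⟶ A ⨿ A) (hf : IsDecision f h)
    (f' : A' ⟶ B' ⨿ D') (h' : A' ⟶ A' ⨿ A') (hf' : IsDecision f' h') :
    IsDecision (coprod.map f f' ≫ exch B D B' D')
      (coprod.map h h' ≫ exch A A A' A') := by
  rw [isDecision_iff] at hf hf' ⊢
  obtain ⟨hinv, hρ⟩ := hf
  obtain ⟨hinv', hρ'⟩ := hf'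
  refine ⟨?_, ?_⟩
  · rw [copairRestrictions_coprod_map_comp_exch]
    exact (hinv.coprod_map hinv').iso_comp (exchIso A A' A A')
  · rw [rho_comp_mono, rho_comp_mono, rho_coprod_map, rho_coprod_map, hρ, hρ']

/-- If `f : A ⟶ B ⨿ D` has decision `h` and `f' : A' ⟶ B' ⨿ D'` has decision
`h'`, then `(1+τ+1) ∘ (f + f') : A ⨿ A' ⟶ (B ⨿ B') ⨿ (D ⨿ D')` has decision
`(1+τ+1) ∘ (h + h')`. -/
theorem stmt_13
    (htot : ∀ A B : C, ρ (coprod.inl : A ⟶ A ⨿ B) = 𝟙 A ∧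
      ρ (coprod.inr : B ⟶ A ⨿ B) = 𝟙 B)
    (hzero : ∀ A : C, ρ (0 : A ⟶ A) = (0 : A ⟶ A))
    {A B D A' B' D' : C}
    (f : A ⟶ B ⨿ D) (h : A ⟶ A ⨿ A) (hf : IsDecision f h)
    (f' : A' ⟶ B' ⨿ D') (h' : A' ⟶ A' ⨿ A') (hf' : IsDecision f' h') :
    IsDecision (coprod.map f f' ≫ exch B D B' D')
      (coprod.map h h' ≫ exch A A A' A') :=
  stmt_13_general f h hf f' h' hf'
end

section
/- In a category with both a restriction structure and binary products (ordinary categorical products), for restriction idempotents e, e' on an object A, the restriction overline{⟨e,e'⟩} of the pairing ⟨e,e'⟩ : A → A × A is the join of e and e' in the semilattice of restriction idempotents on A. Consequently this join distributes over meets: e ∧ (e₁ ∨ e₂) = (e ∧ e₁) ∨ (e ∧ e₂). -/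
/-!
The pairing `⟨e, e'⟩` is total exactly where both `e` and `e'` are. Since
`ρ (f ≫ g) ≤ ρ f`, projecting `⟨e, e'⟩` onto either factor shows that `ρ ⟨e, e'⟩` lies above
`e = ρ e` and `e' = ρ e'`. Conversely an upper bound `d` of `e` and `e'` fixes both components,
hence `d ≫ ⟨e, e'⟩ = ⟨e, e'⟩`, which forces `ρ ⟨e, e'⟩ ≤ d`. Distributivity is axiom R.3:
precomposing with a restriction idempotent `e` commutes with `ρ`, and `e ≫ ⟨e₁, e₂⟩` is the
pairing of `e ≫ e₁` and `e ≫ e₂`.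
-/

open CategoryTheory CategoryTheory.Limits

universe v u

open RestrictionCategory

namespace RestrictionCategory

variable {C : Type u} [Category.{v} C] [RestrictionCategory C]

theorem comp_comm_of_ρ_eq_self {A : C} {e d : A ⟶ A} (he : ρ e = e) (hd : ρ d = d) :
    e ≫ d = d ≫ e := by
  simpa only [he, hd] using R2 e d

theorem ρ_comp_of_ρ_eq_self {A B : C} {e : A ⟶ A} (he : ρ e = e) (f : A ⟶ B) :
    ρ (e ≫ f) = e ≫ ρ f := by
  simpa only [he] using R3 e f

theorem ρ_comp_comp_ρ {A B D : C} (f : A ⟶ B) (g : B ⟶ D) :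
    ρ (f ≫ g) ≫ ρ f = ρ (f ≫ g) := by
  have h : ρ (f ≫ g) = ρ f ≫ ρ (f ≫ g) := by
    conv_lhs => rw [← R1 f, Category.assoc]
    exact R3 f (f ≫ g)
  rw [R2, ← h]

theorem ρ_comp_eq_of_comp_eq {A B : C} {d : A ⟶ A} {f : A ⟶ B} (hd : ρ d = d)
    (hdf : d ≫ f = f) : ρ f ≫ d = ρ f := by
  simpa only [hdf, hd] using ρ_comp_comp_ρ d f

section Products

variable {A X Y : C} [HasBinaryProduct X Y]

theorem ρ_comp_ρ_prod_lift_left (f : A ⟶ X) (g : A ⟶ Y) :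
    ρ f ≫ ρ (prod.lift f g) = ρ f := by
  simpa only [prod.lift_fst] using ρ_comp_comp_ρ (prod.lift f g) prod.fst

theorem ρ_comp_ρ_prod_lift_right (f : A ⟶ X) (g : A ⟶ Y) :
    ρ g ≫ ρ (prod.lift f g) = ρ g := by
  simpa only [prod.lift_snd] using ρ_comp_comp_ρ (prod.lift f g) prod.snd

theorem comp_ρ_prod_lift {e : A ⟶ A} (he : ρ e = e) (f : A ⟶ X) (g : A ⟶ Y) :
    e ≫ ρ (prod.lift f g) = ρ (prod.lift (e ≫ f) (e ≫ g)) := by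
  rw [← prod.comp_lift, ρ_comp_of_ρ_eq_self he]

end Products

theorem ρ_prod_lift_comp_of_le {A : C} [HasBinaryProduct A A] {e e' d : A ⟶ A}
    (he : ρ e = e) (he' : ρ e' = e') (hd : ρ d = d) (hed : e ≫ d = e) (he'd : e' ≫ d = e') :
    ρ (prod.lift e e') ≫ d = ρ (prod.lift e e') := by
  apply ρ_comp_eq_of_comp_eq hd
  rw [prod.comp_lift, ← comp_comm_of_ρ_eq_self he hd, ← comp_comm_of_ρ_eq_self he' hd,
    hed, he'd]

end RestrictionCategory

/-- In a category with a restriction structure and binary products, for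
restriction idempotents `e, e'` on `A`, `overline{⟨e,e'⟩}` is the join of `e`
and `e'` among restriction idempotents on `A` (with order `e ≤ d` iff
`d ∘ e = e`, meet given by composition), and this join distributes over
meets: `e ∧ (e₁ ∨ e₂) = (e ∧ e₁) ∨ (e ∧ e₂)`. -/
theorem stmt_16 {C : Type u} [Category.{v} C] [RestrictionCategory C]
    [HasBinaryProducts C] :
    (∀ (A : C) (e e' : A ⟶ A), ρ e = e → ρ e' = e' →
      (e ≫ ρ (prod.lift e e') = e ∧
       e' ≫ ρ (prod.lift e e') = e' ∧
       ∀ d : A ⟶ A, ρ d = d → e ≫ d = e → e' ≫ d = e' →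
         ρ (prod.lift e e') ≫ d = ρ (prod.lift e e'))) ∧
    (∀ (A : C) (e e₁ e₂ : A ⟶ A), ρ e = e → ρ e₁ = e₁ → ρ e₂ = e₂ →
      e ≫ ρ (prod.lift e₁ e₂) = ρ (prod.lift (e ≫ e₁) (e ≫ e₂))) := by
  refine ⟨fun A e e' he he' => ⟨?_, ?_, fun d hd => ρ_prod_lift_comp_of_le he he' hd⟩,
    fun A e e₁ e₂ he _ _ => comp_ρ_prod_lift he e₁ e₂⟩
  · simpa only [he] using ρ_comp_ρ_prod_lift_left e e'
  · simpa only [he'] using ρ_comp_ρ_prod_lift_right e e'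
end
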